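/- arXiv:2502.05009 — 3 statements merged into one kernel-verified Lean document; each statement's English description precedes it below -/
import Mathlib

section
/- Let ε be an irrational real number with 0 < ε < 1, and define the slope μ(d) = (d_1 + ε d_2 − d_3)/(d_1 + d_2 + d_3) for d ∈ ℕ³ \ {0}. If d, e ∈ ℕ³ \ {0} satisfy μ(d) = μ(e), then χ_Q(d,e) = χ_Q(e,d), where χ_Q is the Euler form of the Markov quiver. -/
/-- Euler form of the Markov quiver, on natural dimension vectors. -/
def markovChiNat (d e : Fin 3 → ℕ) : ℤ :=
  ((d 0 : ℤ) * e 0 + d 1 * e 1 + d 2 * e 2) - 2 * ((d 0 : ℤ) * e 1 + d 1 * e 2 + d 2 * e 0)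

theorem generic_stability_same_slope_symmetric_euler_form
    (ε : ℝ) (hirr : Irrational ε) (h0 : 0 < ε) (h1 : ε < 1)
    (d e : Fin 3 → ℕ) (hd : d ≠ 0) (he : e ≠ 0)
    (hslope :
      ((d 0 : ℝ) + ε * d 1 - d 2) / ((d 0 : ℝ) + d 1 + d 2) =
        ((e 0 : ℝ) + ε * e 1 - e 2) / ((e 0 : ℝ) + e 1 + e 2)) :
    markovChiNat d e = markovChiNat e d := by
  obtain ⟨i, hi⟩ := Function.ne_iff.mp hd
  obtain ⟨j, hj⟩ := Function.ne_iff.mp he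
  have hdn : 0 < d 0 + d 1 + d 2 := by fin_cases i <;> simp_all <;> omega
  have hen : 0 < e 0 + e 1 + e 2 := by fin_cases j <;> simp_all <;> omega
  have hSd : (0:ℝ) < (d 0 : ℝ) + d 1 + d 2 := by exact_mod_cast hdn
  have hSe : (0:ℝ) < (e 0 : ℝ) + e 1 + e 2 := by exact_mod_cast hen
  rw [div_eq_div_iff (by linarith) (by linarith)] at hslope
  have key : ε * (((d 1 : ℤ) * ((e 0 : ℤ) + e 1 + e 2)
        - (e 1 : ℤ) * ((d 0 : ℤ) + d 1 + d 2) : ℤ) : ℝ) =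
      ((((e 0 : ℤ) - e 2) * ((d 0 : ℤ) + d 1 + d 2)
        - ((d 0 : ℤ) - d 2) * ((e 0 : ℤ) + e 1 + e 2) : ℤ) : ℝ) := by
    push_cast
    linear_combination hslope
  have ha : (d 1 : ℤ) * ((e 0 : ℤ) + e 1 + e 2)
      - (e 1 : ℤ) * ((d 0 : ℤ) + d 1 + d 2) = 0 := by
    by_contra hne
    apply hirr
    refine ⟨((((e 0 : ℤ) - e 2) * ((d 0 : ℤ) + d 1 + d 2)
        - ((d 0 : ℤ) - d 2) * ((e 0 : ℤ) + e 1 + e 2) : ℤ) : ℚ) /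
      (((d 1 : ℤ) * ((e 0 : ℤ) + e 1 + e 2)
        - (e 1 : ℤ) * ((d 0 : ℤ) + d 1 + d 2) : ℤ) : ℚ), ?_⟩
    have hne' : ((((d 1 : ℤ) * ((e 0 : ℤ) + e 1 + e 2)
        - (e 1 : ℤ) * ((d 0 : ℤ) + d 1 + d 2) : ℤ)) : ℝ) ≠ 0 := by
      exact_mod_cast hne
    have : ((((e 0 : ℤ) - e 2) * ((d 0 : ℤ) + d 1 + d 2)
        - ((d 0 : ℤ) - d 2) * ((e 0 : ℤ) + e 1 + e 2) : ℤ) : ℝ) /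
      (((d 1 : ℤ) * ((e 0 : ℤ) + e 1 + e 2)
        - (e 1 : ℤ) * ((d 0 : ℤ) + d 1 + d 2) : ℤ) : ℝ) = ε := by
      rw [div_eq_iff hne']
      exact key.symm
    rw [← this]
    push_cast
    ring
  have hb : (((e 0 : ℤ) - e 2) * ((d 0 : ℤ) + d 1 + d 2)
      - ((d 0 : ℤ) - d 2) * ((e 0 : ℤ) + e 1 + e 2) : ℤ) = 0 := by
    have h' : (((d 1 : ℤ) * ((e 0 : ℤ) + e 1 + e 2)
        - (e 1 : ℤ) * ((d 0 : ℤ) + d 1 + d 2) : ℤ) : ℝ) = 0 := by exact_mod_cast ha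
    rw [h', mul_zero] at key
    exact_mod_cast key.symm
  have h1' : (d 1 : ℤ) * ((e 0 : ℤ) + e 1 + e 2) = (e 1 : ℤ) * ((d 0 : ℤ) + d 1 + d 2) := by
    linarith
  have hsum : ((d 0 : ℤ) + d 2) * ((e 0 : ℤ) + e 1 + e 2)
      = ((e 0 : ℤ) + e 2) * ((d 0 : ℤ) + d 1 + d 2) := by
    linear_combination -h1'
  have h0' : (d 0 : ℤ) * ((e 0 : ℤ) + e 1 + e 2) = (e 0 : ℤ) * ((d 0 : ℤ) + d 1 + d 2) := by
    linarith
  have h2' : (d 2 : ℤ) * ((e 0 : ℤ) + e 1 + e 2) = (e 2 : ℤ) * ((d 0 : ℤ) + d 1 + d 2) := by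
    linarith
  have hSez : ((e 0 : ℤ) + e 1 + e 2) ≠ 0 := by
    have : (0:ℤ) < (e 0 : ℤ) + e 1 + e 2 := by exact_mod_cast hen
    omega
  have m01 : (d 0 : ℤ) * e 1 = (d 1 : ℤ) * e 0 :=
    mul_right_cancel₀ hSez (by linear_combination (e 1 : ℤ) * h0' - (e 0 : ℤ) * h1')
  have m12 : (d 1 : ℤ) * e 2 = (d 2 : ℤ) * e 1 :=
    mul_right_cancel₀ hSez (by linear_combination (e 2 : ℤ) * h1' - (e 1 : ℤ) * h2')
  have m20 : (d 2 : ℤ) * e 0 = (d 0 : ℤ) * e 2 :=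
    mul_right_cancel₀ hSez (by linear_combination (e 0 : ℤ) * h2' - (e 2 : ℤ) * h0')
  unfold markovChiNat
  linear_combination (-2 : ℤ) * m01 + (-2 : ℤ) * m12 + (-2 : ℤ) * m20
end

section
/- For every prime power q ≥ 2, the number of F_q-points of the variety {a₁b₁ = 0, a₂b₂ = 0} ⊂ A⁴ exceeds the number of F_q-points of the variety {b₁a₂ + b₂a₁ = 0, a₁b₁ = 0} ⊂ A⁴ by exactly (q−1)². -/
open Finset

private lemma ite_and_one {P Q : Prop} [Decidable P] [Decidable Q] :
    (if P ∧ Q then (1:ℕ) else 0) = (if P then 1 else 0) * (if Q then 1 else 0) := by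
  split_ifs <;> simp_all

private lemma sum_ab (F : Type*) [Field F] [Fintype F] [DecidableEq F] :
    (∑ a : F, ∑ b : F, if a * b = 0 then (1:ℕ) else 0) = 2 * Fintype.card F - 1 := by
  have h0 : (0:F) ∈ (univ : Finset F) := mem_univ 0
  rw [← Finset.add_sum_erase _ _ h0]
  have h1 : (∑ b : F, if (0:F) * b = 0 then (1:ℕ) else 0) = Fintype.card F := by
    simp
  have h2 : ∀ a ∈ (univ : Finset F).erase 0,
      (∑ b : F, if a * b = 0 then (1:ℕ) else 0) = 1 := by
    intro a ha
    have ha' : a ≠ 0 := (Finset.mem_erase.mp ha).1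
    simp [mul_eq_zero, ha']
  rw [h1, Finset.sum_congr rfl h2]
  simp only [Finset.sum_const, smul_eq_mul, mul_one]
  rw [Finset.card_erase_of_mem h0, Finset.card_univ]
  have : 1 ≤ Fintype.card F := Fintype.card_pos
  omega

private lemma count1 (F : Type*) [Field F] [Fintype F] [DecidableEq F] :
    Nat.card {v : F × F × F × F // v.1 * v.2.2.1 = 0 ∧ v.2.1 * v.2.2.2 = 0}
      = (2 * Fintype.card F - 1) * (2 * Fintype.card F - 1) := by
  rw [Nat.card_eq_fintype_card, Fintype.card_subtype, Finset.card_filter]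
  simp only [Fintype.sum_prod_type]
  rw [← sum_ab F]
  rw [Finset.sum_mul_sum]
  simp only [Finset.sum_mul, Finset.mul_sum, ite_and_one]
  exact Finset.sum_congr rfl fun x _ => Finset.sum_congr rfl fun y _ => Finset.sum_comm

private lemma count2 (F : Type*) [Field F] [Fintype F] [DecidableEq F] :
    Nat.card {v : F × F × F × F //
        v.2.2.1 * v.2.1 + v.2.2.2 * v.1 = 0 ∧ v.1 * v.2.2.1 = 0}
      = Fintype.card F * (2 * Fintype.card F - 1)
        + (Fintype.card F - 1) * Fintype.card F := by
  rw [Nat.card_eq_fintype_card, Fintype.card_subtype, Finset.card_filter]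
  simp only [Fintype.sum_prod_type]
  rw [← Finset.add_sum_erase _ _ (mem_univ (0:F))]
  have h1 : (∑ y : F, ∑ z : F, ∑ w : F,
      if z * y + w * (0:F) = 0 ∧ (0:F) * z = 0 then (1:ℕ) else 0)
      = Fintype.card F * (2 * Fintype.card F - 1) := by
    simp only [mul_zero, zero_mul, add_zero, eq_self_iff_true, and_true]
    have key : (∑ y : F, ∑ z : F, (if z * y = 0 then (1:ℕ) else 0))
        = 2 * Fintype.card F - 1 := by
      rw [← sum_ab F]
      exact Finset.sum_congr rfl fun y _ => Finset.sum_congr rfl fun z _ => by rw [mul_comm]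
    simp only [Finset.sum_const, Finset.card_univ, smul_eq_mul, mul_one, ← Finset.mul_sum]
    rw [key]
  have h2 : ∀ x ∈ (univ : Finset F).erase 0,
      (∑ y : F, ∑ z : F, ∑ w : F,
        if z * y + w * x = 0 ∧ x * z = 0 then (1:ℕ) else 0) = Fintype.card F := by
    intro x hx
    have hx' : x ≠ 0 := (Finset.mem_erase.mp hx).1
    have key : ∀ y z w : F, (z * y + w * x = 0 ∧ x * z = 0) ↔ (z = 0 ∧ w = 0) := by
      intro y z w
      constructor
      · rintro ⟨h1, h2⟩
        rcases mul_eq_zero.mp h2 with h | h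
        · exact absurd h hx'
        · subst h
          simp only [zero_mul, zero_add] at h1
          rcases mul_eq_zero.mp h1 with h | h
          · exact ⟨rfl, h⟩
          · exact absurd h hx'
      · rintro ⟨rfl, rfl⟩; simp
    simp only [key]
    simp [ite_and_one, Finset.sum_ite_eq']
  rw [h1, Finset.sum_congr rfl h2]
  simp only [Finset.sum_const, smul_eq_mul]
  rw [Finset.card_erase_of_mem (mem_univ 0), Finset.card_univ]


/-- Coordinates `(a₁,a₂,b₁,b₂)`.  The generic-potential variety `{a₁b₁ = 0, a₂b₂ = 0}` has
exactly `(q-1)²` more `F_q`-points than the marginal one `{b₁a₂ + b₂a₁ = 0, a₁b₁ = 0}`. -/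
theorem point_count_difference (F : Type*) [Field F] [Fintype F] (h : 2 ≤ Fintype.card F) :
    Nat.card {v : F × F × F × F // v.1 * v.2.2.1 = 0 ∧ v.2.1 * v.2.2.2 = 0} =
      Nat.card {v : F × F × F × F //
          v.2.2.1 * v.2.1 + v.2.2.2 * v.1 = 0 ∧ v.1 * v.2.2.1 = 0} +
        (Fintype.card F - 1) ^ 2 := by
  classical
  rw [count1 F, count2 F]
  have h1 : 1 ≤ Fintype.card F := by omega
  have h2 : 1 ≤ 2 * Fintype.card F := by omega
  zify [h1, h2]
  ring
end

section
/- Let V = ℂ² ⊗ ℂ² ⊗ ℂ² with its natural action of G = GL₂(ℂ) × GL₂(ℂ) × GL₂(ℂ). The G-orbit of the tensor t₀ = e₁⊗e₁⊗e₁ + e₂⊗e₂⊗e₂ is Zariski dense in V. -/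
open MvPolynomial

/-- `t₀ = e₁⊗e₁⊗e₁ + e₂⊗e₂⊗e₂` in coordinates. -/
noncomputable def t0 : Fin 2 → Fin 2 → Fin 2 → ℂ := fun i j k =>
  if i = j ∧ j = k then 1 else 0

/-- The coordinates of `(g₁,g₂,g₃) · t₀` in `ℂ²⊗ℂ²⊗ℂ²`. -/
noncomputable def orbitPoint (g₁ g₂ g₃ : GL (Fin 2) ℂ) :
    Fin 2 × Fin 2 × Fin 2 → ℂ := fun x =>
  ∑ i' : Fin 2, ∑ j' : Fin 2, ∑ k' : Fin 2,
    (g₁ : Matrix (Fin 2) (Fin 2) ℂ) x.1 i' * (g₂ : Matrix (Fin 2) (Fin 2) ℂ) x.2.1 j' *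
      (g₃ : Matrix (Fin 2) (Fin 2) ℂ) x.2.2 k' * t0 i' j' k'

/-! ### Auxiliary material -/

/-- A `2×2` matrix over a field with vanishing determinant has rank at most one. -/
private lemma rank1 {K : Type*} [Field K] (N : Fin 2 → Fin 2 → K)
    (h : N 0 0 * N 1 1 - N 0 1 * N 1 0 = 0) :
    ∃ u v : Fin 2 → K, ∀ i j, N i j = u i * v j := by
  by_cases h0 : N 0 0 = 0
  · have h01 : N 0 1 * N 1 0 = 0 := by linear_combination N 1 1 * h0 - h
    rcases mul_eq_zero.mp h01 with h1 | h1
    · exact ⟨![0, 1], ![N 1 0, N 1 1], by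
        intro i j; fin_cases i <;> fin_cases j <;> simp [h0, h1]⟩
    · exact ⟨![N 0 1, N 1 1], ![0, 1], by
        intro i j; fin_cases i <;> fin_cases j <;> simp [h0, h1]⟩
  · refine ⟨![N 0 0, N 1 0], ![1, N 0 1 / N 0 0], ?_⟩
    intro i j
    fin_cases i <;> fin_cases j <;> simp
    · field_simp
    · field_simp
      linear_combination h

private lemma quadRootP {K : Type*} [Field K] (A B D δ : K) (ha : A ≠ 0) (h2 : (2:K) ≠ 0)
    (hδ : δ^2 = B^2 - 4*A*D) :
    A * ((B+δ)*(2*A)⁻¹)^2 - B*((B+δ)*(2*A)⁻¹) + D = 0 := by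
  have h2A : (2*A) ≠ 0 := mul_ne_zero h2 ha
  field_simp
  linear_combination hδ

private lemma quadRootM {K : Type*} [Field K] (A B D δ : K) (ha : A ≠ 0) (h2 : (2:K) ≠ 0)
    (hδ : δ^2 = B^2 - 4*A*D) :
    A * ((B-δ)*(2*A)⁻¹)^2 - B*((B-δ)*(2*A)⁻¹) + D = 0 := by
  have h2A : (2*A) ≠ 0 := mul_ne_zero h2 ha
  field_simp
  linear_combination hδ

/-- Over an algebraically closed field, a `2×2×2` tensor `y` with invertible first slice and
nonvanishing hyperdeterminant is a sum of two decomposable tensors. -/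
private lemma keyDecomp {K : Type*} [Field K] [IsAlgClosed K] (h2 : (2:K) ≠ 0)
    (y : Fin 2 → Fin 2 → Fin 2 → K)
    (ha : y 0 0 0 * y 1 1 0 - y 0 1 0 * y 1 0 0 ≠ 0)
    (hDel : (y 0 0 1 * y 1 1 0 + y 1 1 1 * y 0 0 0 - y 0 1 1 * y 1 0 0 - y 1 0 1 * y 0 1 0) ^ 2
      - 4 * (y 0 0 0 * y 1 1 0 - y 0 1 0 * y 1 0 0) * (y 0 0 1 * y 1 1 1 - y 0 1 1 * y 1 0 1) ≠ 0) :
    ∃ α : Fin 3 × Fin 2 × Fin 2 → K, ∀ i j k : Fin 2,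
      α (0,i,0) * α (1,j,0) * α (2,k,0) + α (0,i,1) * α (1,j,1) * α (2,k,1) = y i j k := by
  obtain ⟨A, hA⟩ : ∃ t : K, t = y 0 0 0 * y 1 1 0 - y 0 1 0 * y 1 0 0 := ⟨_, rfl⟩
  obtain ⟨B, hB⟩ : ∃ t : K,
      t = y 0 0 1 * y 1 1 0 + y 1 1 1 * y 0 0 0 - y 0 1 1 * y 1 0 0 - y 1 0 1 * y 0 1 0 := ⟨_, rfl⟩
  obtain ⟨D, hD⟩ : ∃ t : K, t = y 0 0 1 * y 1 1 1 - y 0 1 1 * y 1 0 1 := ⟨_, rfl⟩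
  rw [← hA] at ha
  rw [← hA, ← hB, ← hD] at hDel
  obtain ⟨δ, hδ⟩ := IsAlgClosed.exists_pow_nat_eq (k := K) (B ^ 2 - 4 * A * D) (n := 2) two_pos
  have hδ0 : δ ≠ 0 := by
    intro h; apply hDel; rw [← hδ, h]; ring
  have h2A : (2 * A) ≠ 0 := mul_ne_zero h2 ha
  obtain ⟨lam, hlam⟩ : ∃ t : K, t = (B + δ) * (2 * A)⁻¹ := ⟨_, rfl⟩
  obtain ⟨mu, hmu⟩ : ∃ t : K, t = (B - δ) * (2 * A)⁻¹ := ⟨_, rfl⟩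
  have hrootl : A * lam ^ 2 - B * lam + D = 0 := by
    rw [hlam]; exact quadRootP A B D δ ha h2 hδ
  have hrootm : A * mu ^ 2 - B * mu + D = 0 := by
    rw [hmu]; exact quadRootM A B D δ ha h2 hδ
  have hlm0 : lam - mu ≠ 0 := by
    have : lam - mu = 2 * δ * (2 * A)⁻¹ := by rw [hlam, hmu]; ring
    rw [this]
    exact mul_ne_zero (mul_ne_zero h2 hδ0) (inv_ne_zero h2A)
  have detl : (y 0 0 1 - lam * y 0 0 0) * (y 1 1 1 - lam * y 1 1 0)
      - (y 0 1 1 - lam * y 0 1 0) * (y 1 0 1 - lam * y 1 0 0) = 0 := by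
    have h' := hrootl
    rw [hA, hB, hD] at h'
    linear_combination h'
  have detm : (y 0 0 1 - mu * y 0 0 0) * (y 1 1 1 - mu * y 1 1 0)
      - (y 0 1 1 - mu * y 0 1 0) * (y 1 0 1 - mu * y 1 0 0) = 0 := by
    have h' := hrootm
    rw [hA, hB, hD] at h'
    linear_combination h'
  obtain ⟨u₁, v₁, e₁⟩ := rank1 (fun i j => y i j 1 - lam * y i j 0) detl
  obtain ⟨u₂, v₂, e₂⟩ := rank1 (fun i j => y i j 1 - mu * y i j 0) detm
  obtain ⟨c, hc'⟩ : ∃ t : K, t = (lam - mu)⁻¹ := ⟨_, rfl⟩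
  have hc : c * (lam - mu) = 1 := by rw [hc']; exact inv_mul_cancel₀ hlm0
  refine ⟨fun m =>
    if m.1 = 0 then (if m.2.2 = 0 then c * u₂ m.2.1 else c * u₁ m.2.1)
    else if m.1 = 1 then (if m.2.2 = 0 then v₂ m.2.1 else v₁ m.2.1)
    else (if m.2.2 = 0 then (if m.2.1 = 0 then 1 else lam)
      else (if m.2.1 = 0 then -1 else -mu)), ?_⟩
  intro i j k
  have E1 := e₁ i j
  have E2 := e₂ i j
  fin_cases k <;> simp
  · linear_combination c * E1 - c * E2 + y i j 0 * hc
  · linear_combination c * mu * E1 - c * lam * E2 + y i j 1 * hc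

/-- The coordinates of the orbit, as polynomials in the twelve matrix entries. -/
private noncomputable def Phi : Fin 2 × Fin 2 × Fin 2 → MvPolynomial (Fin 3 × Fin 2 × Fin 2) ℂ :=
  fun x => X (0, x.1, 0) * X (1, x.2.1, 0) * X (2, x.2.2, 0)
    + X (0, x.1, 1) * X (1, x.2.1, 1) * X (2, x.2.2, 1)

/-- The product of the three determinants, as a polynomial in the twelve matrix entries. -/
private noncomputable def Dpoly : MvPolynomial (Fin 3 × Fin 2 × Fin 2) ℂ :=
  (X (0,0,0) * X (0,1,1) - X (0,0,1) * X (0,1,0)) *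
  ((X (1,0,0) * X (1,1,1) - X (1,0,1) * X (1,1,0)) *
   (X (2,0,0) * X (2,1,1) - X (2,0,1) * X (2,1,0)))

/-- If `p` vanishes on the orbit, then the pullback of `p` along the orbit parametrization
is the zero polynomial in the twelve matrix entries. -/
private lemma stepA (p : MvPolynomial (Fin 2 × Fin 2 × Fin 2) ℂ)
    (hvan : ∀ g₁ g₂ g₃ : GL (Fin 2) ℂ, eval (orbitPoint g₁ g₂ g₃) p = 0) :
    eval₂ C Phi p = 0 := by
  have hD : Dpoly ≠ 0 := by
    intro h
    have h2 := congrArg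
      (eval (fun m : Fin 3 × Fin 2 × Fin 2 => if m.2.1 = m.2.2 then (1:ℂ) else 0)) h
    simp [Dpoly] at h2
  have hmul : eval₂ C Phi p * Dpoly = 0 := by
    apply MvPolynomial.funext; intro v
    rw [map_zero, map_mul]
    by_cases hv : eval v Dpoly = 0
    · rw [hv, mul_zero]
    · have hv' : (v (0,0,0) * v (0,1,1) - v (0,0,1) * v (0,1,0)) *
          ((v (1,0,0) * v (1,1,1) - v (1,0,1) * v (1,1,0)) *
           (v (2,0,0) * v (2,1,1) - v (2,0,1) * v (2,1,0))) ≠ 0 := by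
        simpa [Dpoly] using hv
      obtain ⟨d1, hrest⟩ := mul_ne_zero_iff.mp hv'
      obtain ⟨d2, d3⟩ := mul_ne_zero_iff.mp hrest
      have det1 : (Matrix.of fun i r => v (0,i,r)).det ≠ 0 := by
        rw [Matrix.det_fin_two]; simpa using d1
      have det2 : (Matrix.of fun i r => v (1,i,r)).det ≠ 0 := by
        rw [Matrix.det_fin_two]; simpa using d2
      have det3 : (Matrix.of fun i r => v (2,i,r)).det ≠ 0 := by
        rw [Matrix.det_fin_two]; simpa using d3
      have he : eval v (eval₂ C Phi p) =
          eval (orbitPoint (Matrix.GeneralLinearGroup.mkOfDetNeZero _ det1)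
            (Matrix.GeneralLinearGroup.mkOfDetNeZero _ det2)
            (Matrix.GeneralLinearGroup.mkOfDetNeZero _ det3)) p := by
        rw [eval₂_comp_left (eval v) C Phi p]
        have hid : (eval v).comp (C : ℂ →+* MvPolynomial (Fin 3 × Fin 2 × Fin 2) ℂ)
            = RingHom.id ℂ := RingHom.ext (by simp)
        rw [hid, eval₂_id]
        have harg : (⇑(eval v) ∘ Phi) = orbitPoint
            (Matrix.GeneralLinearGroup.mkOfDetNeZero _ det1)
            (Matrix.GeneralLinearGroup.mkOfDetNeZero _ det2)
            (Matrix.GeneralLinearGroup.mkOfDetNeZero _ det3) := by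
          funext x
          show eval v (Phi x) = _
          have hg1 : ((Matrix.GeneralLinearGroup.mkOfDetNeZero _ det1 : GL (Fin 2) ℂ) :
              Matrix (Fin 2) (Fin 2) ℂ) = Matrix.of fun i r => v (0,i,r) := rfl
          have hg2 : ((Matrix.GeneralLinearGroup.mkOfDetNeZero _ det2 : GL (Fin 2) ℂ) :
              Matrix (Fin 2) (Fin 2) ℂ) = Matrix.of fun i r => v (1,i,r) := rfl
          have hg3 : ((Matrix.GeneralLinearGroup.mkOfDetNeZero _ det3 : GL (Fin 2) ℂ) :
              Matrix (Fin 2) (Fin 2) ℂ) = Matrix.of fun i r => v (2,i,r) := rfl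
          rw [orbitPoint, hg1, hg2, hg3]
          simp [Phi, t0, Fin.sum_univ_two]
        rw [harg]
      rw [he, hvan, zero_mul]
  rcases mul_eq_zero.mp hmul with h | h
  · exact h
  · exact absurd h hD

private abbrev Pc : Type := MvPolynomial (Fin 2 × Fin 2 × Fin 2) ℂ
private abbrev Kc : Type := AlgebraicClosure (FractionRing Pc)

private noncomputable def fc : Pc →+* Kc :=
  (algebraMap (FractionRing Pc) Kc).comp (algebraMap Pc (FractionRing Pc))

private lemma fc_inj : Function.Injective fc := by
  rw [fc, RingHom.coe_comp]
  exact (RingHom.injective (algebraMap (FractionRing Pc) Kc)).comp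
    (IsFractionRing.injective Pc (FractionRing Pc))

/-- A generic-looking point of `ℂ²⊗ℂ²⊗ℂ²`, used to witness nonvanishing of the relevant
polynomials: the first slice is the identity and the second slice is `diag (0, 1)`. -/
private noncomputable def wpt : Fin 2 × Fin 2 × Fin 2 → ℂ := fun x =>
  if x.2.2 = 0 then (if x.1 = x.2.1 then 1 else 0)
  else (if x.1 = 1 ∧ x.2.1 = 1 then 1 else 0)

private lemma haP : (X (0,0,0) * X (1,1,0) - X (0,1,0) * X (1,0,0) : Pc) ≠ 0 := by
  intro h
  have h2 := congrArg (eval wpt) h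
  simp [wpt] at h2

private lemma hdP : ((X (0,0,1) * X (1,1,0) + X (1,1,1) * X (0,0,0)
      - X (0,1,1) * X (1,0,0) - X (1,0,1) * X (0,1,0)) ^ 2
    - 4 * (X (0,0,0) * X (1,1,0) - X (0,1,0) * X (1,0,0))
      * (X (0,0,1) * X (1,1,1) - X (0,1,1) * X (1,0,1)) : Pc) ≠ 0 := by
  intro h
  have h2 := congrArg (eval wpt) h
  simp [wpt] at h2

/-- The `GL₂×GL₂×GL₂`-orbit of `t₀` is Zariski dense in `ℂ²⊗ℂ²⊗ℂ²`: every polynomial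
vanishing on the orbit is zero. -/
theorem orbit_of_generic_tensor_is_zariski_dense
    (p : MvPolynomial (Fin 2 × Fin 2 × Fin 2) ℂ)
    (hvan : ∀ g₁ g₂ g₃ : GL (Fin 2) ℂ, eval (orbitPoint g₁ g₂ g₃) p = 0) :
    p = 0 := by
  have haK : (fun i j k : Fin 2 => fc (X (i,j,k))) 0 0 0 * (fun i j k : Fin 2 => fc (X (i,j,k))) 1 1 0
      - (fun i j k : Fin 2 => fc (X (i,j,k))) 0 1 0 * (fun i j k : Fin 2 => fc (X (i,j,k))) 1 0 0 ≠ 0 := by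
    simp only
    intro h
    apply haP
    apply fc_inj
    rw [map_zero]
    simp only [map_sub, map_add, map_mul, map_pow]
    exact h
  have hdK : ((fun i j k : Fin 2 => fc (X (i,j,k))) 0 0 1 * (fun i j k : Fin 2 => fc (X (i,j,k))) 1 1 0
        + (fun i j k : Fin 2 => fc (X (i,j,k))) 1 1 1 * (fun i j k : Fin 2 => fc (X (i,j,k))) 0 0 0
        - (fun i j k : Fin 2 => fc (X (i,j,k))) 0 1 1 * (fun i j k : Fin 2 => fc (X (i,j,k))) 1 0 0
        - (fun i j k : Fin 2 => fc (X (i,j,k))) 1 0 1 * (fun i j k : Fin 2 => fc (X (i,j,k))) 0 1 0) ^ 2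
      - 4 * ((fun i j k : Fin 2 => fc (X (i,j,k))) 0 0 0 * (fun i j k : Fin 2 => fc (X (i,j,k))) 1 1 0
        - (fun i j k : Fin 2 => fc (X (i,j,k))) 0 1 0 * (fun i j k : Fin 2 => fc (X (i,j,k))) 1 0 0)
      * ((fun i j k : Fin 2 => fc (X (i,j,k))) 0 0 1 * (fun i j k : Fin 2 => fc (X (i,j,k))) 1 1 1
        - (fun i j k : Fin 2 => fc (X (i,j,k))) 0 1 1 * (fun i j k : Fin 2 => fc (X (i,j,k))) 1 0 1) ≠ 0 := by
    simp only
    intro h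
    apply hdP
    apply fc_inj
    rw [map_zero]
    simp only [map_sub, map_add, map_mul, map_pow, map_ofNat]
    exact h
  obtain ⟨α, hα⟩ := keyDecomp (K := Kc) two_ne_zero (fun i j k => fc (X (i,j,k))) haK hdK
  have hq := stepA p hvan
  have h0 : eval₂Hom (fc.comp C) α (eval₂ C Phi p) = 0 := by rw [hq]; simp
  rw [eval₂_comp_left (eval₂Hom (fc.comp C) α) C Phi p] at h0
  have hcomp : (eval₂Hom (fc.comp (C : ℂ →+* Pc)) α).comp
      (C : ℂ →+* MvPolynomial (Fin 3 × Fin 2 × Fin 2) ℂ) = fc.comp C :=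
    RingHom.ext (by simp)
  rw [hcomp] at h0
  have hphi : (⇑(eval₂Hom (fc.comp (C : ℂ →+* Pc)) α) ∘ Phi)
      = fun x : Fin 2 × Fin 2 × Fin 2 => fc (X x) := by
    funext x
    obtain ⟨i, j, k⟩ := x
    show eval₂Hom (fc.comp C) α (Phi (i, j, k)) = fc (X (i, j, k))
    simpa [Phi] using hα i j k
  rw [hphi] at h0
  have hfp : fc p = eval₂ (fc.comp C) (fun x : Fin 2 × Fin 2 × Fin 2 => fc (X x)) p := by
    conv_lhs => rw [← eval₂_eta p]
    rw [eval₂_comp_left fc C X p]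
    rfl
  exact fc_inj (by rw [hfp, h0, map_zero])
end
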